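/- arXiv:1207.2748 — 3 statements merged into one kernel-verified Lean document; each statement's English description precedes it below -/
import Mathlib

section
/- Let n be sufficiently large, r ≥ (ln ln n)^2, and let G' be a bipartite graph with parts X and Y each of size n such that (i) every vertex degree lies strictly between r − 4r/ln ln n and r + 4r/ln ln n, and (ii) for any sets A ⊆ X, B ⊆ Y with |A|, |B| ≤ 0.6n, the number of edges between A and B is at most 0.8 r √(|A||B|). Then G' contains a spanning k-regular subgraph for some k ≥ r − 100r/ln ln n. -/
/-- Number of edges of a bipartite graph (given by the relation `B` between the
two parts) between a set `A` in the left part and a set `B'` in the right part. -/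
noncomputable def bipEdges {n : ℕ} (B : Fin n → Fin n → Prop)
    (A B' : Finset (Fin n)) : ℕ :=
  Set.ncard {x : Fin n × Fin n | x.1 ∈ A ∧ x.2 ∈ B' ∧ B x.1 x.2}

/-!
Write `e(x, T)` for `#(T.bipartiteAbove G x)`. Take `d ≈ r - 99r/ln ln n`, a little below every
degree. By the Ore–Ryser theorem it suffices that `d|T| ≤ ∑ₓ min(d, e(x, T))` for every `T ⊆ Y`.
If `|T| ≤ 0.6n`, only the vertices with `e(x, T) ≥ d` lose in this sum, at most `deg x - d` each;
by (ii) there are at most `0.66|T|` of them, and the degree slack `∑_{y ∈ T} deg y - d|T|` pays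
for the loss. If `|T| > 0.6n`, the vertices `L` with `e(x, T) < d` lose at most their degree
slack plus `e(L, Y \ T)`, and `Y \ T` is small: either its total degree is already below
`d|Y \ T|` plus that slack, or `|L| ≤ 1.1|Y \ T|` and (ii) gives the same bound.

The Ore–Ryser theorem reduces to Hall's theorem by giving every vertex `deg - d` spare slots
that absorb the discarded edges.
-/

open Finset

namespace OreRyser

lemma card_le_card_toLeft_add_sum {X ι : Type*} [DecidableEq ι] {m : ι → ℕ}
    (A : Finset (X ⊕ Σ i, Fin (m i))) : #A ≤ #A.toLeft + ∑ i ∈ A.toRight.image Sigma.fst, m i := by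
  have : #A.toRight ≤ #((A.toRight.image Sigma.fst).sigma fun _ => univ) :=
    card_le_card fun c hc => mem_sigma.2 ⟨mem_image_of_mem _ hc, mem_univ _⟩
  rw [← card_toLeft_add_card_toRight (u := A)]
  simpa [card_sigma] using this

section Relation

variable {α β : Type*} (G : α → β → Prop) [DecidableRel G]

lemma card_interedges_eq_sum (U : Finset α) (T : Finset β) :
    #(Rel.interedges G U T) = ∑ a ∈ U, #(T.bipartiteAbove G a) := by
  rw [Rel.interedges, card_filter, sum_product]
  simp only [bipartiteAbove, card_filter]

variable {G} in
lemma card_bipartiteAbove_add_card_bipartiteAbove_compl [Fintype β] [DecidableEq β]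
    (T : Finset β) (a : α) :
    #(T.bipartiteAbove G a) + #(Tᶜ.bipartiteAbove G a) = #(univ.bipartiteAbove G a) := by
  rw [bipartiteAbove, bipartiteAbove, bipartiteAbove,
    ← card_union_of_disjoint (disjoint_filter_filter disjoint_compl_right), ← filter_union,
    union_compl]

def Condition [Fintype α] (d : ℕ) : Prop :=
  ∀ T : Finset β, d * #T ≤ ∑ a, min d #(T.bipartiteAbove G a)

abbrev Edge := {p : α × β // G p.1 p.2}

lemma ncard_setOf_mem_fst [DecidableEq α] [DecidableEq β] (F : Finset (α × β)) (a : α) :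
    {b | (a, b) ∈ F}.ncard = #{p ∈ F | p.1 = a} := by
  rw [← card_image_of_injOn (f := Prod.snd), ← Set.ncard_coe_finset]
  · congr; ext b; simp
  · intro p hp q hq h
    simp only [coe_filter, Set.mem_ofPred_eq] at hp hq
    exact Prod.ext (hp.2.trans hq.2.symm) h

lemma ncard_setOf_mem_snd [DecidableEq α] [DecidableEq β] (F : Finset (α × β)) (b : β) :
    {a | (a, b) ∈ F}.ncard = #{p ∈ F | p.2 = b} := by
  rw [← card_image_of_injOn (f := Prod.fst), ← Set.ncard_coe_finset]
  · congr; ext a; simp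
  · intro p hp q hq h
    simp only [coe_filter, Set.mem_ofPred_eq] at hp hq
    exact Prod.ext h (hp.2.trans hq.2.symm)

variable {G} [Fintype α] {d : ℕ}

lemma Condition.le_card_bipartiteBelow (h : Condition G d) (b : β) :
    d ≤ #(univ.bipartiteBelow G b) :=
  calc d = d * #{b} := by simp
    _ ≤ ∑ a, min d #(({b} : Finset β).bipartiteAbove G a) := h {b}
    _ ≤ ∑ a, #(({b} : Finset β).bipartiteAbove G a) := sum_le_sum fun _ _ => min_le_right _ _
    _ = _ := by rw [sum_card_bipartiteAbove_eq_sum_card_bipartiteBelow, sum_singleton]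

variable [Fintype β]

lemma Condition.le_card_bipartiteAbove (h : Condition G d)
    (hcard : Fintype.card α = Fintype.card β) (a : α) : d ≤ #(univ.bipartiteAbove G a) := by
  have hle : ∀ a ∈ univ, min d #(univ.bipartiteAbove G a) ≤ d := fun _ _ => min_le_left _ _
  have hsum : ∑ a, min d #(univ.bipartiteAbove G a) = ∑ _a : α, d :=
    le_antisymm (sum_le_sum hle) (by simpa [hcard, mul_comm] using h univ)
  exact min_eq_left_iff.1 ((sum_eq_sum_iff_of_le hle).1 hsum a (mem_univ a))

variable [DecidableEq α] [DecidableEq β]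

lemma card_edges_mem_product (U : Finset α) (T : Finset β) :
    #{e : Edge G | e.1 ∈ U ×ˢ T} = ∑ a ∈ U, #(T.bipartiteAbove G a) := by
  have : ({e : Edge G | e.1 ∈ U ×ˢ T} : Finset _) = (U ×ˢ T).subtype _ := by ext; simp
  rw [this, card_subtype, ← card_interedges_eq_sum]
  rfl

lemma card_edges_fst_eq (a : α) : #{e : Edge G | e.1.1 = a} = #(univ.bipartiteAbove G a) := by
  simpa [Prod.ext_iff, eq_comm] using card_edges_mem_product (G := G) {a} univ

lemma card_edges_snd_mem (T : Finset β) :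
    #{e : Edge G | e.1.2 ∈ T} = ∑ b ∈ T, #(univ.bipartiteBelow G b) := by
  simpa [sum_card_bipartiteAbove_eq_sum_card_bipartiteBelow] using
    card_edges_mem_product (G := G) univ T

lemma card_edges_snd_eq (b : β) : #{e : Edge G | e.1.2 = b} = #(univ.bipartiteBelow G b) := by
  simpa using card_edges_snd_mem (G := G) {b}

lemma Condition.mul_card_le (h : Condition G d) (hcard : Fintype.card α = Fintype.card β)
    (U : Finset α) (T : Finset β) :
    d * #U ≤ d * #T + ∑ a ∈ U, #(Tᶜ.bipartiteAbove G a) := by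
  have hT : d * #Tᶜ + d * #T = d * Fintype.card β := by rw [← mul_add, card_compl_add_card]
  have hU : d * #Uᶜ + d * #U = d * Fintype.card β := by
    rw [← mul_add, card_compl_add_card, hcard]
  have hsum : ∑ a, min d #(Tᶜ.bipartiteAbove G a) ≤
      ∑ a ∈ U, #(Tᶜ.bipartiteAbove G a) + d * #Uᶜ := by
    rw [← sum_add_sum_compl U, mul_comm, ← smul_eq_mul, ← sum_const]
    exact add_le_add (sum_le_sum fun _ _ => min_le_right _ _)
      (sum_le_sum fun _ _ => min_le_left _ _)
  have := h Tᶜ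
  omega

variable (G) in
abbrev GadgetLeft (d : ℕ) := Edge G ⊕ Σ b, Fin (#(univ.bipartiteBelow G b) - d)

variable (G) in
abbrev GadgetRight (d : ℕ) := Edge G ⊕ Σ a, Fin (#(univ.bipartiteAbove G a) - d)

variable (G) in
/-- Each vertex `x` gets `deg x - d` spare slots. In a matching saturating the left side, the
edges matched to themselves form the subgraph: every other edge at `a` uses a spare slot of `a`,
so at least `d` edges at `a` are kept, and every spare slot of `b` uses an edge at `b` that is
not kept, so at most `d` edges at `b` are kept. -/
def gadget (d : ℕ) : GadgetLeft G d → GadgetRight G d → Prop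
  | .inl e, .inl e' => e = e'
  | .inl e, .inr c => c.1 = e.1.1
  | .inr c, .inl e => e.1.2 = c.1
  | .inr _, .inr _ => False

instance (d : ℕ) : DecidableRel (gadget G d)
  | .inl _, .inl _ | .inl _, .inr _ | .inr _, .inl _ | .inr _, .inr _ => by
    unfold gadget; infer_instance

lemma card_add_sum_le_card_gadget_nbhd (A : Finset (GadgetLeft G d)) :
    #(A.toLeft ∪ ({e | e.1.2 ∈ A.toRight.image Sigma.fst} : Finset (Edge G))) +
        ∑ a ∈ A.toLeft.image fun e => e.1.1, (#(univ.bipartiteAbove G a) - d) ≤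
      #{k | ∃ i ∈ A, gadget G d i k} := by
  calc _ = #((A.toLeft ∪ ({e | e.1.2 ∈ A.toRight.image Sigma.fst} : Finset (Edge G))).disjSum
          ((A.toLeft.image fun e => e.1.1).sigma fun _ => univ)) := by
        simp [card_disjSum, card_sigma]
    _ ≤ _ := card_le_card ?_
  rintro (e | ⟨a, j⟩) hk <;> refine mem_filter.2 ⟨mem_univ _, ?_⟩
  · rcases mem_union.1 (inl_mem_disjSum.1 hk) with he | he
    · exact ⟨.inl e, mem_toLeft.1 he, rfl⟩
    · obtain ⟨c, hc, hce⟩ := mem_image.1 (mem_filter.1 he).2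
      exact ⟨.inr c, mem_toRight.1 hc, hce.symm⟩
  · obtain ⟨e, he, hea⟩ := mem_image.1 (mem_sigma.1 (inr_mem_disjSum.1 hk)).1
    exact ⟨.inl e, mem_toLeft.1 he, hea.symm⟩

lemma Condition.card_le_card_gadget_nbhd (h : Condition G d)
    (hcard : Fintype.card α = Fintype.card β) (A : Finset (GadgetLeft G d)) :
    #A ≤ #{k | ∃ i ∈ A, gadget G d i k} := by
  have hA := card_le_card_toLeft_add_sum A
  have hN := card_add_sum_le_card_gadget_nbhd A
  set P := A.toLeft
  set T := A.toRight.image Sigma.fst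
  set U := P.image fun e => e.1.1
  set ET : Finset (Edge G) := {e | e.1.2 ∈ T}
  have hET : #ET = ∑ b ∈ T, #(univ.bipartiteBelow G b) := card_edges_snd_mem T
  have hPET : #(P ∩ ET) ≤ ∑ a ∈ U, #(T.bipartiteAbove G a) := by
    rw [← card_edges_mem_product]
    refine card_le_card fun e he => ?_
    obtain ⟨heP, heT⟩ := mem_inter.1 he
    exact mem_filter.2 ⟨mem_univ _, mem_product.2 ⟨mem_image_of_mem _ heP, (mem_filter.1 heT).2⟩⟩
  have hsplit : ∑ a ∈ U, #(T.bipartiteAbove G a) + ∑ a ∈ U, #(Tᶜ.bipartiteAbove G a) =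
      ∑ a ∈ U, #(univ.bipartiteAbove G a) := by
    rw [← sum_add_distrib]
    exact sum_congr rfl fun a _ => card_bipartiteAbove_add_card_bipartiteAbove_compl T a
  have hT : ∑ b ∈ T, (#(univ.bipartiteBelow G b) - d) + d * #T =
      ∑ b ∈ T, #(univ.bipartiteBelow G b) := by
    rw [mul_comm, ← smul_eq_mul, ← sum_const, ← sum_add_distrib]
    exact sum_congr rfl fun b _ => Nat.sub_add_cancel (h.le_card_bipartiteBelow b)
  have hU : ∑ a ∈ U, #(univ.bipartiteAbove G a) ≤
      ∑ a ∈ U, (#(univ.bipartiteAbove G a) - d) + d * #U := by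
    rw [mul_comm, ← smul_eq_mul, ← sum_const, ← sum_add_distrib]
    exact sum_le_sum fun a _ => le_tsub_add
  -- what remains of Hall's inequality is `d|U| ≤ d|T| + e(U, Tᶜ)`
  have := h.mul_card_le hcard U T
  have := card_union_add_card_inter P ET
  omega

section Matching

variable {f : GadgetLeft G d → GadgetRight G d}

lemma card_unkept_fst_le (hf : f.Injective) (hfG : ∀ i, gadget G d i (f i)) (a : α) :
    #{e : Edge G | e.1.1 = a ∧ f (.inl e) ≠ .inl e} ≤ #(univ.bipartiteAbove G a) - d :=
  calc _ = #(({e : Edge G | e.1.1 = a ∧ f (.inl e) ≠ .inl e} : Finset _).image (f ∘ .inl)) :=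
        (card_image_of_injective _ (hf.comp Sum.inl_injective)).symm
    _ ≤ #(univ.image fun j => (.inr ⟨a, j⟩ : GadgetRight G d)) := by
        refine card_le_card fun k hk => ?_
        obtain ⟨e, he, rfl⟩ := mem_image.1 hk
        obtain ⟨rfl, hne⟩ := (mem_filter.1 he).2
        have hg := hfG (.inl e)
        rcases hfe : f (.inl e) with e' | ⟨a', j⟩ <;> rw [hfe] at hg hne
        · exact absurd (congrArg Sum.inl hg.symm) hne
        · obtain rfl : a' = e.1.1 := hg
          exact mem_image.2 ⟨j, mem_univ _, hfe.symm⟩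
    _ = _ := by
        rw [card_image_of_injective _ fun j j' h => sigma_mk_injective (Sum.inr_injective h)]
        simp

lemma le_card_unkept_snd (hf : f.Injective) (hfG : ∀ i, gadget G d i (f i)) (b : β) :
    #(univ.bipartiteBelow G b) - d ≤ #{e : Edge G | e.1.2 = b ∧ f (.inl e) ≠ .inl e} :=
  calc _ = #(univ.image fun j => f (.inr ⟨b, j⟩)) := by
        rw [card_image_of_injective _ fun j j' h => sigma_mk_injective (Sum.inr_injective (hf h))]
        simp
    _ ≤ #(({e : Edge G | e.1.2 = b ∧ f (.inl e) ≠ .inl e} : Finset _).map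
          Function.Embedding.inl) := by
        refine card_le_card fun k hk => ?_
        obtain ⟨j, -, rfl⟩ := mem_image.1 hk
        have hg := hfG (.inr ⟨b, j⟩)
        rcases hfj : f (.inr ⟨b, j⟩) with e | c <;> rw [hfj] at hg
        · refine mem_map_of_mem _ (mem_filter.2 ⟨mem_univ _, hg, fun hfe => ?_⟩)
          exact Sum.inl_ne_inr (hf (hfe.trans hfj.symm))
        · exact hg.elim
    _ = _ := card_map _

end Matching

lemma forall_card_filter_eq_of_le {F : Finset (α × β)}
    (hcard : Fintype.card α = Fintype.card β) (hα : ∀ a, d ≤ #{p ∈ F | p.1 = a})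
    (hβ : ∀ b, #{p ∈ F | p.2 = b} ≤ d) :
    (∀ a, #{p ∈ F | p.1 = a} = d) ∧ ∀ b, #{p ∈ F | p.2 = b} = d := by
  have hF₁ : ∑ a, #{p ∈ F | p.1 = a} = #F :=
    (card_eq_sum_card_fiberwise fun p _ => mem_univ p.1).symm
  have hF₂ : ∑ b, #{p ∈ F | p.2 = b} = #F :=
    (card_eq_sum_card_fiberwise fun p _ => mem_univ p.2).symm
  have h₁ : ∑ _a : α, d ≤ ∑ a, #{p ∈ F | p.1 = a} := sum_le_sum fun a _ => hα a
  have h₂ : ∑ b, #{p ∈ F | p.2 = b} ≤ ∑ _b : β, d := sum_le_sum fun b _ => hβ b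
  have hd : ∑ _a : α, d = ∑ _b : β, d := by simp [hcard]
  exact ⟨fun a => ((sum_eq_sum_iff_of_le fun a _ => hα a).1 (by omega) a (mem_univ a)).symm,
    fun b => (sum_eq_sum_iff_of_le fun b _ => hβ b).1 (by omega) b (mem_univ b)⟩

theorem Condition.exists_regular_subrel (h : Condition G d)
    (hcard : Fintype.card α = Fintype.card β) :
    ∃ M : α → β → Prop, (∀ a b, M a b → G a b) ∧ (∀ a, {b | M a b}.ncard = d) ∧
      ∀ b, {a | M a b}.ncard = d := by
  obtain ⟨f, hf, hfG⟩ := (Fintype.all_card_le_filter_rel_iff_exists_injective (gadget G d)).1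
    (h.card_le_card_gadget_nbhd hcard)
  set F : Finset (α × β) :=
    ({e : Edge G | f (.inl e) = .inl e} : Finset _).map (Function.Embedding.subtype _)
  have hsplit (q : Edge G → Prop) [DecidablePred q] :
      #{e : Edge G | q e ∧ f (.inl e) = .inl e} + #{e : Edge G | q e ∧ f (.inl e) ≠ .inl e} =
        #{e : Edge G | q e} := by
    rw [← filter_filter, ← filter_filter, card_filter_add_card_filter_not]
  have hF (q : α × β → Prop) [DecidablePred q] :
      #{p ∈ F | q p} = #{e : Edge G | q e.1 ∧ f (.inl e) = .inl e} := by
    rw [filter_map, card_map, filter_filter]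
    simp only [Function.comp_apply, Function.Embedding.coe_subtype, and_comm]
  have hFα (a : α) : d ≤ #{p ∈ F | p.1 = a} := by
    have hsplit_a := hsplit (·.1.1 = a)
    rw [card_edges_fst_eq] at hsplit_a
    have := card_unkept_fst_le hf hfG a
    have := h.le_card_bipartiteAbove hcard a
    rw [hF]
    omega
  have hFβ (b : β) : #{p ∈ F | p.2 = b} ≤ d := by
    have hsplit_b := hsplit (·.1.2 = b)
    rw [card_edges_snd_eq] at hsplit_b
    have := le_card_unkept_snd hf hfG b
    rw [hF]
    omega
  obtain ⟨hα, hβ⟩ := forall_card_filter_eq_of_le hcard hFα hFβ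
  refine ⟨fun a b => (a, b) ∈ F, fun a b hab => ?_, fun a => (ncard_setOf_mem_fst F a).trans (hα a),
    fun b => (ncard_setOf_mem_snd F b).trans (hβ b)⟩
  obtain ⟨⟨_, hG⟩, -, rfl⟩ := mem_map.1 hab
  exact hG

end Relation

lemma le_of_mul_le_sqrt {x y r d : ℝ} (hx : 0 ≤ x) (hy : 0 ≤ y) (hr : 0 < r)
    (hdr : 0.99 * r ≤ d) (h : d * x ≤ 0.8 * r * √(x * y)) : x ≤ 0.66 * y := by
  have hs := Real.sq_sqrt (mul_nonneg hx hy)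
  have hs0 := Real.sqrt_nonneg (x * y)
  have h' : 0.99 * x ≤ 0.8 * √(x * y) := by nlinarith
  nlinarith

lemma sqrt_mul_le_of_le_mul {x y : ℝ} (hy : 0 ≤ y) (hxy : x ≤ 1.1 * y) : √(x * y) ≤ 1.05 * y :=
  (Real.sqrt_le_left (by positivity)).2 (by nlinarith)

section Sparse

variable {α : Type*} [Fintype α] (G : α → α → Prop) [DecidableRel G]

/-- Hypothesis (i), with non-strict bounds. -/
def DegreesWithin (lo hi : ℝ) : Prop :=
  ∀ a, (lo ≤ #(univ.bipartiteAbove G a) ∧ (#(univ.bipartiteAbove G a) : ℝ) ≤ hi) ∧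
    lo ≤ #(univ.bipartiteBelow G a) ∧ (#(univ.bipartiteBelow G a) : ℝ) ≤ hi

/-- Hypothesis (ii). -/
def SparseOnSmallSets (r : ℝ) : Prop :=
  ∀ A T : Finset α, (#A : ℝ) ≤ 0.6 * Fintype.card α → (#T : ℝ) ≤ 0.6 * Fintype.card α →
    ((∑ a ∈ A, #(T.bipartiteAbove G a) : ℕ) : ℝ) ≤ 0.8 * r * √(#A * #T)

variable {G} {r lo hi : ℝ} {d : ℕ}

lemma SparseOnSmallSets.card_le_of_forall_le (hexp : SparseOnSmallSets G r)
    (hn : 5 ≤ Fintype.card α) (hr : 0 < r) (hdr : 0.99 * r ≤ d) {T H : Finset α}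
    (hT : (#T : ℝ) ≤ 0.6 * Fintype.card α) (hH : ∀ a ∈ H, d ≤ #(T.bipartiteAbove G a)) :
    (#H : ℝ) ≤ 0.66 * #T := by
  have key {H'} (hH' : H' ⊆ H) (hcard : (#H' : ℝ) ≤ 0.6 * Fintype.card α) :
      (#H' : ℝ) ≤ 0.66 * #T := by
    have hsum : #H' * d ≤ ∑ a ∈ H', #(T.bipartiteAbove G a) :=
      card_nsmul_le_sum H' _ d fun a ha => hH a (hH' ha)
    refine le_of_mul_le_sqrt (by positivity) (by positivity) hr hdr
      (le_trans ?_ (hexp H' T hcard hT))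
    rw [mul_comm]
    exact_mod_cast hsum
  suffices hHn : (#H : ℝ) ≤ 0.6 * Fintype.card α from key subset_rfl hHn
  -- otherwise a subset of `H` of size `⌊0.6n⌋` would already violate `key`
  by_contra! hHn
  set m := ⌊0.6 * (Fintype.card α : ℝ)⌋₊
  have hm : (m : ℝ) ≤ 0.6 * Fintype.card α := Nat.floor_le (by positivity)
  have hm' : 0.6 * (Fintype.card α : ℝ) < m + 1 := Nat.lt_floor_add_one _
  obtain ⟨H', hH', hcard⟩ := exists_subset_card_eq (s := H) (n := m)
    (by exact_mod_cast hm.trans hHn.le)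
  have hH'T := key hH' (by rw [hcard]; exact hm)
  rw [hcard] at hH'T
  have : (5 : ℝ) ≤ Fintype.card α := by exact_mod_cast hn
  linarith

lemma mul_card_le_sum_min_of_card_le [DecidableEq α] (hexp : SparseOnSmallSets G r)
    (hdeg : DegreesWithin G lo hi) (hn : 5 ≤ Fintype.card α) (hr : 0 < r) (hdr : 0.99 * r ≤ d)
    (hdlo : d ≤ lo) (hgap : hi - d ≤ 1.1 * (lo - d)) {T : Finset α}
    (hT : (#T : ℝ) ≤ 0.6 * Fintype.card α) :
    d * #T ≤ ∑ a, min d #(T.bipartiteAbove G a) := by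
  set H : Finset α := {a | d ≤ #(T.bipartiteAbove G a)}
  have hH : (#H : ℝ) ≤ 0.66 * #T :=
    hexp.card_le_of_forall_le hn hr hdr hT fun a ha => (mem_filter.1 ha).2
  have hpt (a : α) : (#(T.bipartiteAbove G a) : ℝ) - (if a ∈ H then hi - d else 0) ≤
      (min d #(T.bipartiteAbove G a) : ℕ) := by
    have : (#(T.bipartiteAbove G a) : ℝ) ≤ hi :=
      (Nat.cast_le.2 (card_le_card (filter_subset_filter _ (subset_univ T)))).trans (hdeg a).1.2
    by_cases ha : d ≤ #(T.bipartiteAbove G a)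
    · rw [if_pos (mem_filter.2 ⟨mem_univ a, ha⟩), min_eq_left ha]
      linarith
    · rw [if_neg (show a ∉ H from fun h => ha (mem_filter.1 h).2), min_eq_right (not_le.1 ha).le,
        sub_zero]
  have hsum := sum_le_sum fun a (_ : a ∈ univ) => hpt a
  rw [sum_sub_distrib, sum_ite_mem, univ_inter, sum_const, nsmul_eq_mul,
    ← Nat.cast_sum, sum_card_bipartiteAbove_eq_sum_card_bipartiteBelow] at hsum
  have hdegT : #T * lo ≤ ∑ b ∈ T, (#(univ.bipartiteBelow G b) : ℝ) := by
    rw [← nsmul_eq_mul, ← sum_const]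
    exact sum_le_sum fun b _ => (hdeg b).2.1
  have hHT : (#H : ℝ) * (hi - d) ≤ #T * (lo - d) := by
    rcases le_total 0 (hi - d) with h | h <;> nlinarith
  rw [← Nat.cast_le (α := ℝ)]
  push_cast at hsum ⊢
  linarith

lemma sum_card_bipartiteAbove_le (hexp : SparseOnSmallSets G r) (hdeg : DegreesWithin G lo hi)
    (hr : 0 < r) (hdr : 0.99 * r ≤ d) (hdlo : d ≤ lo) (hgap : hi - d ≤ 1.1 * (lo - d))
    {S : Finset α} (hS : (#S : ℝ) ≤ 0.4 * Fintype.card α) (L : Finset α) :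
    ((∑ a ∈ L, #(S.bipartiteAbove G a) : ℕ) : ℝ) ≤ d * #S + #L * (lo - d) := by
  have hS₀ : (0 : ℝ) ≤ #S := Nat.cast_nonneg _
  have hL₀ : (0 : ℝ) ≤ #L := Nat.cast_nonneg _
  by_cases hc : (#S : ℝ) * (hi - d) ≤ #L * (lo - d)
  · have hle : ∑ a ∈ L, #(S.bipartiteAbove G a) ≤ ∑ b ∈ S, #(univ.bipartiteBelow G b) := by
      rw [← sum_card_bipartiteAbove_eq_sum_card_bipartiteBelow]
      exact sum_le_sum_of_subset (subset_univ L)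
    have hdegS : ∑ b ∈ S, (#(univ.bipartiteBelow G b) : ℝ) ≤ #S * hi := by
      rw [← nsmul_eq_mul, ← sum_const]
      exact sum_le_sum fun b _ => (hdeg b).2.2
    have := (Nat.cast_le (α := ℝ)).2 hle
    push_cast at this ⊢
    linarith
  · replace hc := not_le.1 hc
    have hgap₀ : 0 < lo - d := by
      refine lt_of_le_of_ne (sub_nonneg.2 hdlo) fun h => hc.not_ge ?_
      rw [← h, mul_zero]
      exact mul_nonpos_of_nonneg_of_nonpos hS₀ (by linarith)
    have hLS : (#L : ℝ) ≤ 1.1 * #S := by nlinarith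
    have hsqrt := sqrt_mul_le_of_le_mul hS₀ hLS
    have := hexp L S (by linarith) (by linarith)
    nlinarith

lemma mul_card_le_sum_min_of_lt_card [DecidableEq α] (hexp : SparseOnSmallSets G r)
    (hdeg : DegreesWithin G lo hi) (hr : 0 < r) (hdr : 0.99 * r ≤ d) (hdlo : d ≤ lo)
    (hgap : hi - d ≤ 1.1 * (lo - d)) {T : Finset α} (hT : 0.6 * (Fintype.card α : ℝ) < #T) :
    d * #T ≤ ∑ a, min d #(T.bipartiteAbove G a) := by
  set L : Finset α := {a | #(T.bipartiteAbove G a) < d}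
  have hpt (a : α) : (d : ℝ) - (if a ∈ L then (d - lo) + #(Tᶜ.bipartiteAbove G a) else 0) ≤
      (min d #(T.bipartiteAbove G a) : ℕ) := by
    have hsplit : (#(T.bipartiteAbove G a) : ℝ) + #(Tᶜ.bipartiteAbove G a) =
        #(univ.bipartiteAbove G a) :=
      mod_cast card_bipartiteAbove_add_card_bipartiteAbove_compl T a
    have := (hdeg a).1.1
    by_cases ha : #(T.bipartiteAbove G a) < d
    · rw [if_pos (mem_filter.2 ⟨mem_univ a, ha⟩), min_eq_right ha.le]
      linarith
    · rw [if_neg (show a ∉ L from fun h => ha (mem_filter.1 h).2), min_eq_left (not_lt.1 ha),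
        sub_zero]
  have hsum := sum_le_sum fun a (_ : a ∈ univ) => hpt a
  rw [sum_sub_distrib, sum_ite_mem, univ_inter, sum_add_distrib, sum_const, sum_const,
    nsmul_eq_mul, nsmul_eq_mul, card_univ] at hsum
  have hTc : (#Tᶜ : ℝ) + #T = Fintype.card α := mod_cast card_compl_add_card T
  have hdT : (d : ℝ) * #Tᶜ + d * #T = Fintype.card α * d := by rw [← mul_add, hTc, mul_comm]
  have := sum_card_bipartiteAbove_le hexp hdeg hr hdr hdlo hgap (S := Tᶜ) (by linarith) L
  rw [← Nat.cast_le (α := ℝ)]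
  push_cast at this hsum ⊢
  linarith

theorem SparseOnSmallSets.condition [DecidableEq α] (hexp : SparseOnSmallSets G r)
    (hdeg : DegreesWithin G lo hi) (hn : 5 ≤ Fintype.card α) (hr : 0 < r) (hdr : 0.99 * r ≤ d)
    (hdlo : d ≤ lo) (hgap : hi - d ≤ 1.1 * (lo - d)) : Condition G d := fun T =>
  if hT : (#T : ℝ) ≤ 0.6 * Fintype.card α then
    mul_card_le_sum_min_of_card_le hexp hdeg hn hr hdr hdlo hgap hT
  else mul_card_le_sum_min_of_lt_card hexp hdeg hr hdr hdlo hgap (not_le.1 hT)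

end Sparse

lemma ncard_setOf_eq_card_bipartiteAbove {α β : Type*} [Fintype β] (G : α → β → Prop)
    [DecidableRel G] (a : α) : {b | G a b}.ncard = #(univ.bipartiteAbove G a) := by
  rw [Set.ncard_eq_toFinset_card', Set.toFinset_ofPred]
  rfl

lemma ncard_setOf_eq_card_bipartiteBelow {α β : Type*} [Fintype α] (G : α → β → Prop)
    [DecidableRel G] (b : β) : {a | G a b}.ncard = #(univ.bipartiteBelow G b) := by
  rw [Set.ncard_eq_toFinset_card', Set.toFinset_ofPred]
  rfl

lemma bipEdges_eq_sum {n : ℕ} (B : Fin n → Fin n → Prop) [DecidableRel B]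
    (A T : Finset (Fin n)) :
    bipEdges B A T = ∑ a ∈ A, #(T.bipartiteAbove B a) := by
  rw [bipEdges, ← card_interedges_eq_sum, ← Set.ncard_coe_finset]
  congr
  ext
  simp [Rel.mem_interedges_iff]

end OreRyser

lemma le_log_log_of_exp_exp_le {c x : ℝ} (h : Real.exp (Real.exp c) ≤ x) :
    c ≤ Real.log (Real.log x) := by
  have hlog : Real.exp c ≤ Real.log x :=
    (Real.le_log_iff_exp_le ((Real.exp_pos _).trans_le h)).2 h
  exact (Real.le_log_iff_exp_le ((Real.exp_pos c).trans_le hlog)).2 hlog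

open OreRyser in
/-- for sufficiently large `n`, `r ≥ (ln ln n)²`, any bipartite graph
with parts of size `n` whose degrees all lie strictly between `r − 4r/ln ln n` and
`r + 4r/ln ln n`, and in which any two sets `A ⊆ X`, `B ⊆ Y` of size at most `0.6n`
span at most `0.8 r √(|A||B|)` edges, contains a spanning `k`-regular subgraph for
some `k ≥ r − 100r/ln ln n`. -/
theorem ore_ryser_regular_subgraph :
    ∃ N : ℕ, ∀ n : ℕ, N ≤ n → ∀ r : ℝ, (Real.log (Real.log n)) ^ 2 ≤ r →
    ∀ B : Fin n → Fin n → Prop,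
    (∀ u : Fin n,
        r - 4 * r / Real.log (Real.log n) < (Set.ncard {v | B u v} : ℝ) ∧
        (Set.ncard {v | B u v} : ℝ) < r + 4 * r / Real.log (Real.log n)) →
    (∀ v : Fin n,
        r - 4 * r / Real.log (Real.log n) < (Set.ncard {u | B u v} : ℝ) ∧
        (Set.ncard {u | B u v} : ℝ) < r + 4 * r / Real.log (Real.log n)) →
    (∀ A B' : Finset (Fin n), (A.card : ℝ) ≤ 0.6 * n → (B'.card : ℝ) ≤ 0.6 * n →
        (bipEdges B A B' : ℝ) ≤ 0.8 * r * Real.sqrt ((A.card : ℝ) * (B'.card : ℝ))) →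
    ∃ (k : ℕ) (M : Fin n → Fin n → Prop),
      r - 100 * r / Real.log (Real.log n) ≤ (k : ℝ) ∧
      (∀ u v, M u v → B u v) ∧
      (∀ u : Fin n, Set.ncard {v | M u v} = k) ∧
      (∀ v : Fin n, Set.ncard {u | M u v} = k) := by
  refine ⟨⌈Real.exp (Real.exp (10 ^ 4))⌉₊, fun n hn r hr B hX hY hE => ?_⟩
  classical
  set L := Real.log (Real.log n)
  have hnL : Real.exp (Real.exp (10 ^ 4)) ≤ n := Nat.ceil_le.1 hn
  have hL : 10 ^ 4 ≤ L := le_log_log_of_exp_exp_le hnL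
  have hn5 : 5 ≤ Fintype.card (Fin n) := by
    have := Real.add_one_le_exp (10 ^ 4)
    have := Real.add_one_le_exp (Real.exp (10 ^ 4))
    simpa using (show (5 : ℝ) ≤ n by linarith)
  set q := r / L
  have hqL : q * L = r := div_mul_cancel₀ r (by positivity)
  have hq : L ≤ q := (le_div_iff₀ (by positivity)).2 (by nlinarith)
  obtain ⟨d, hd₁, hd₂⟩ : ∃ d : ℕ, r - 99 * q ≤ d ∧ (d : ℝ) ≤ r - 98 * q :=
    ⟨⌈r - 99 * q⌉₊, Nat.le_ceil _, by
      linarith [Nat.ceil_lt_add_one (show 0 ≤ r - 99 * q by nlinarith)]⟩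
  have hdeg : DegreesWithin B (r - 4 * q) (r + 4 * q) := fun a => by
    have hXa := hX a
    have hYa := hY a
    rw [ncard_setOf_eq_card_bipartiteAbove, mul_div_assoc] at hXa
    rw [ncard_setOf_eq_card_bipartiteBelow, mul_div_assoc] at hYa
    exact ⟨⟨hXa.1.le, hXa.2.le⟩, hYa.1.le, hYa.2.le⟩
  have hexp : SparseOnSmallSets B r := fun A T hA hT => by
    rw [← bipEdges_eq_sum]
    exact hE A T (by simpa using hA) (by simpa using hT)
  have hcond : Condition B d :=
    hexp.condition hdeg hn5 (by nlinarith) (by nlinarith) (by linarith) (by linarith)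
  obtain ⟨M, hMB, hMa, hMb⟩ := hcond.exists_regular_subrel (by simp)
  exact ⟨d, M, by rw [mul_div_assoc]; linarith, hMB, hMa, hMb⟩
end

section
/- Let H be a Hamilton cycle of an n-vertex graph G and let k ≤ n. Then the number of almost 2-factors F of G whose edge set has Hamming distance at most k from H (i.e., |E(F) Δ E(H)| ≤ k) is at most C(n,k) · (Δ(G)+1)^{2k}. -/
open scoped symmDiff
open Finset Nat

/-- `F` is an almost 2-factor of the `n`-vertex graph `G`: a spanning subgraph that is
a vertex-disjoint union of cycles (every vertex has degree 2 or 0) together with at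
most `n/ln²n` isolated vertices. -/
def AlmostTwoFactor {n : ℕ} (G F : SimpleGraph (Fin n)) : Prop :=
  F ≤ G ∧
  (∀ v : Fin n, (F.neighborSet v).ncard = 2 ∨ (F.neighborSet v).ncard = 0) ∧
  (Set.ncard {v : Fin n | (F.neighborSet v).ncard = 0} : ℝ) ≤ (n : ℝ) / (Real.log n) ^ 2

/-- The maximum degree of a graph on `Fin n`. -/
noncomputable def maxDeg {n : ℕ} (G : SimpleGraph (Fin n)) : ℕ :=
  Finset.univ.sup fun v : Fin n => (G.neighborSet v).ncard

lemma aux_pow_le_choose_mul {n k : ℕ} (hk : k ≤ n) : n ^ k ≤ n.choose k * k ^ k := by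
  have hprod : n ^ k * k ! ≤ n.descFactorial k * k ^ k := by
    have h1 : n ^ k * k ! = ∏ i ∈ range k, (n * (k - i)) := by
      rw [Finset.prod_mul_distrib, Finset.prod_const, Finset.card_range]
      congr 1
      rw [← Finset.prod_range_add_one_eq_factorial k,
        ← Finset.prod_range_reflect (fun j => j + 1) k]
      apply Finset.prod_congr rfl
      intro i hi
      simp only [Finset.mem_range] at hi
      omega
    have h2 : n.descFactorial k * k ^ k = ∏ i ∈ range k, ((n - i) * k) := by
      rw [Finset.prod_mul_distrib, Finset.prod_const, Finset.card_range,
        Nat.descFactorial_eq_prod_range]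
    rw [h1, h2]
    apply Finset.prod_le_prod'
    intro i hi
    simp only [Finset.mem_range] at hi
    have hin : i ≤ n := le_trans (le_of_lt hi) hk
    have hik : i ≤ k := le_of_lt hi
    have hkn : (k : ℤ) ≤ n := by exact_mod_cast hk
    have hi0 : (0 : ℤ) ≤ i := Int.ofNat_nonneg i
    zify [hik, hin]
    nlinarith
  rw [Nat.descFactorial_eq_factorial_mul_choose, mul_assoc] at hprod
  have hfac : 0 < k ! := Nat.factorial_pos k
  calc n ^ k = n ^ k * k ! / k ! := by rw [Nat.mul_div_cancel _ hfac]
    _ ≤ k ! * (n.choose k * k ^ k) / k ! := Nat.div_le_div_right (by rw [mul_comm] at hprod ⊢; omega)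
    _ = n.choose k * k ^ k := by rw [Nat.mul_div_cancel_left _ hfac]

lemma aux_sum_choose_le {m n k d : ℕ} (hm : 2 * m ≤ n * d) (hk : k ≤ n) :
    ∑ i ∈ range (k + 1), m.choose i ≤ n.choose k * (d + 1) ^ (2 * k) := by
  have hCpos : 1 ≤ n.choose k := Nat.choose_pos hk
  rcases le_or_gt m k with hmk | hkm
  · have hsum : ∑ i ∈ range (k + 1), m.choose i = 2 ^ m := by
      rw [← Nat.sum_range_choose m]
      apply (Finset.sum_subset (Finset.range_subset_range.2 (by omega)) ?_).symm
      intro i _ hi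
      simp only [Finset.mem_range] at hi
      exact Nat.choose_eq_zero_of_lt (by omega)
    rw [hsum]
    rcases Nat.eq_zero_or_pos d with hd | hd
    · subst hd
      have : m = 0 := by omega
      subst this
      simpa using hCpos
    · calc 2 ^ m ≤ 2 ^ (2 * k) := Nat.pow_le_pow_right (by norm_num) (by omega)
        _ ≤ (d + 1) ^ (2 * k) := Nat.pow_le_pow_left (by omega) _
        _ ≤ n.choose k * (d + 1) ^ (2 * k) := Nat.le_mul_of_pos_left _ hCpos
  · rcases Nat.eq_zero_or_pos k with hk0 | hk0
    · subst hk0; simp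
    have h3m : 3 * m ≤ n * (d + 1) ^ 2 := by nlinarith
    rw [← Nat.cast_le (α := ℝ)]
    push_cast
    set L : ℝ := ∑ i ∈ range (k + 1), (m.choose i : ℝ) with hL
    have hK0 : (0 : ℝ) < k := by exact_mod_cast hk0
    have hM0 : (0 : ℝ) < m := by exact_mod_cast hk0.trans hkm
    set x : ℝ := (k : ℝ) / (m : ℝ) with hx
    have hx0 : 0 < x := div_pos hK0 hM0
    have hx1 : x ≤ 1 := by
      rw [div_le_one hM0]
      exact_mod_cast hkm.le
    have step1 : L * x ^ k ≤ (1 + x) ^ m := by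
      calc L * x ^ k = ∑ i ∈ range (k + 1), (m.choose i : ℝ) * x ^ k := by
            rw [hL, Finset.sum_mul]
        _ ≤ ∑ i ∈ range (k + 1), (m.choose i : ℝ) * x ^ i := by
            apply Finset.sum_le_sum
            intro i hi
            simp only [Finset.mem_range] at hi
            exact mul_le_mul_of_nonneg_left
              (pow_le_pow_of_le_one hx0.le hx1 (by omega)) (Nat.cast_nonneg _)
        _ ≤ ∑ i ∈ range (m + 1), (m.choose i : ℝ) * x ^ i := by
            apply Finset.sum_le_sum_of_subset_of_nonneg
              (Finset.range_subset_range.2 (by omega))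
            intro i _ _
            positivity
        _ = (x + 1) ^ m := by
            rw [add_pow x 1 m]
            apply Finset.sum_congr rfl
            intro i _
            rw [one_pow, mul_one, mul_comm]
        _ = (1 + x) ^ m := by rw [add_comm]
    have step2 : (1 + x) ^ m ≤ 3 ^ k := by
      have h1 : (1 + x) ^ m ≤ Real.exp x ^ m :=
        pow_le_pow_left₀ (by positivity) (by linarith [Real.add_one_le_exp x]) m
      have h2 : Real.exp x ^ m = Real.exp ((k : ℝ)) := by
        rw [← Real.exp_nat_mul, hx, mul_div_cancel₀ _ (ne_of_gt hM0)]
      have h3 : Real.exp ((k : ℝ)) ≤ 3 ^ k := by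
        have : Real.exp ((k : ℝ)) = Real.exp 1 ^ k := by
          rw [← Real.exp_nat_mul, mul_one]
        rw [this]
        apply pow_le_pow_left₀ (Real.exp_pos 1).le
        have := Real.exp_one_lt_d9
        linarith
      linarith
    -- combine
    have hxMk : x ^ k * (m : ℝ) ^ k = (k : ℝ) ^ k := by
      rw [← mul_pow, hx, div_mul_cancel₀ _ (ne_of_gt hM0)]
    have key : L * (k : ℝ) ^ k ≤ (n.choose k : ℝ) * ((d : ℝ) + 1) ^ (2 * k) * (k : ℝ) ^ k := by
      have c1 : L * (k : ℝ) ^ k ≤ (3 * (m : ℝ)) ^ k := by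
        calc L * (k : ℝ) ^ k = L * x ^ k * (m : ℝ) ^ k := by rw [mul_assoc, hxMk]
          _ ≤ 3 ^ k * (m : ℝ) ^ k := by
              apply mul_le_mul_of_nonneg_right (step1.trans step2) (by positivity)
          _ = (3 * (m : ℝ)) ^ k := by rw [mul_pow]
      have c2 : (3 * (m : ℝ)) ^ k ≤ ((n : ℝ) * ((d : ℝ) + 1) ^ 2) ^ k := by
        apply pow_le_pow_left₀ (by positivity)
        exact_mod_cast h3m
      have c3 : ((n : ℝ) * ((d : ℝ) + 1) ^ 2) ^ k = (n : ℝ) ^ k * ((d : ℝ) + 1) ^ (2 * k) := by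
        rw [mul_pow, ← pow_mul]
      have c4 : (n : ℝ) ^ k ≤ (n.choose k : ℝ) * (k : ℝ) ^ k := by
        exact_mod_cast aux_pow_le_choose_mul hk
      calc L * (k : ℝ) ^ k ≤ (n : ℝ) ^ k * ((d : ℝ) + 1) ^ (2 * k) := by
            rw [← c3]; exact c1.trans c2
        _ ≤ (n.choose k : ℝ) * (k : ℝ) ^ k * ((d : ℝ) + 1) ^ (2 * k) :=
            mul_le_mul_of_nonneg_right c4 (by positivity)
        _ = (n.choose k : ℝ) * ((d : ℝ) + 1) ^ (2 * k) * (k : ℝ) ^ k := by ring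
    exact le_of_mul_le_mul_right key (by positivity)

/-- if `H` is a Hamilton cycle of `G` and `k ≤ n`, the number of almost
2-factors of `G` at Hamming distance at most `k` from `H` is at most
`C(n,k)·(Δ(G)+1)^(2k)`. -/
theorem count_almost_two_factors_near_ham {n k : ℕ} (G H : SimpleGraph (Fin n))
    (hH : H ≤ G ∧ H.Connected ∧ ∀ v : Fin n, (H.neighborSet v).ncard = 2)
    (hk : k ≤ n) :
    Set.ncard {F : SimpleGraph (Fin n) |
        AlmostTwoFactor G F ∧ Set.ncard (F.edgeSet ∆ H.edgeSet) ≤ k} ≤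
      Nat.choose n k * (maxDeg G + 1) ^ (2 * k) := by
  classical
  obtain ⟨hHG, -, -⟩ := hH
  have hEfin : G.edgeSet.Finite := Set.toFinite _
  set Ef : Finset (Sym2 (Fin n)) := hEfin.toFinset with hEf
  set B : Finset (Finset (Sym2 (Fin n))) :=
    Ef.powerset.filter (fun s => s.card ≤ k) with hBdef
  have main : Set.ncard {F : SimpleGraph (Fin n) |
      AlmostTwoFactor G F ∧ Set.ncard (F.edgeSet ∆ H.edgeSet) ≤ k} ≤
      (↑B : Set (Finset (Sym2 (Fin n)))).ncard := by
    apply Set.ncard_le_ncard_of_injOn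
      (fun F => (Set.toFinite (F.edgeSet ∆ H.edgeSet)).toFinset)
    · rintro F ⟨⟨hFG, -, -⟩, hcard⟩
      have hsub : F.edgeSet ∆ H.edgeSet ⊆ G.edgeSet := by
        refine le_trans symmDiff_le_sup ?_
        exact sup_le (SimpleGraph.edgeSet_mono hFG) (SimpleGraph.edgeSet_mono hHG)
      simp only [hBdef, Finset.coe_filter, Set.mem_setOf_eq, Finset.mem_powerset]
      constructor
      · rw [Set.Finite.toFinset_subset, hEf, Set.Finite.coe_toFinset]
        exact hsub
      · rw [← Set.ncard_eq_toFinset_card]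
        exact hcard
    · intro F1 _ F2 _ he
      have hset : F1.edgeSet ∆ H.edgeSet = F2.edgeSet ∆ H.edgeSet := by
        have h0 := congrArg (fun s : Finset (Sym2 (Fin n)) => (↑s : Set (Sym2 (Fin n)))) he
        simpa only [Set.Finite.coe_toFinset] using h0
      have h1 := congrArg (fun s => s ∆ H.edgeSet) hset
      simp only [symmDiff_symmDiff_cancel_right, SimpleGraph.edgeSet_inj] at h1
      exact h1
  rw [Set.ncard_coe_finset] at main
  have hB : B.card ≤ ∑ i ∈ range (k + 1), (Ef.card).choose i := by
    calc B.card ≤ ((range (k + 1)).biUnion (fun i => Finset.powersetCard i Ef)).card := by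
          apply Finset.card_le_card
          intro s hs
          simp only [hBdef, Finset.mem_filter, Finset.mem_powerset] at hs
          rw [Finset.mem_biUnion]
          exact ⟨s.card, Finset.mem_range.2 (by omega),
            Finset.mem_powersetCard.2 ⟨hs.1, rfl⟩⟩
      _ ≤ ∑ i ∈ range (k + 1), (Finset.powersetCard i Ef).card := Finset.card_biUnion_le
      _ = ∑ i ∈ range (k + 1), Ef.card.choose i := by
          simp [Finset.card_powersetCard]
  have hdeg : 2 * Ef.card ≤ n * maxDeg G := by
    have h1 : Ef.card = G.edgeFinset.card := by
      rw [hEf]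
      congr 1
      exact Set.Finite.toFinset_eq_toFinset _
    rw [h1, ← SimpleGraph.sum_degrees_eq_twice_card_edges]
    have hdv : ∀ v : Fin n, G.degree v ≤ maxDeg G := by
      intro v
      have h2 : (G.neighborSet v).ncard = G.degree v := by
        rw [Set.ncard_eq_toFinset_card']
        rfl
      rw [← h2, maxDeg]
      exact Finset.le_sup (f := fun v => (G.neighborSet v).ncard) (Finset.mem_univ v)
    calc ∑ v : Fin n, G.degree v ≤ ∑ _v : Fin n, maxDeg G := Finset.sum_le_sum fun v _ => hdv v
      _ = n * maxDeg G := by simp [Finset.sum_const, Finset.card_univ]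
  exact main.trans (hB.trans (aux_sum_choose_le hdeg hk))
end

section
/- Let G ~ G(n,p) with p ≥ ln n / n. Then asymptotically almost surely, for every pair of disjoint vertex sets A, B the number of edges between A and B is less than 0.8·np·√(|A||B|). -/
open Filter

/-- The probability that the binomial random graph `G(n,p)` satisfies property `A`. -/
noncomputable def prG (n : ℕ) (p : ℝ) (A : SimpleGraph (Fin n) → Prop) : ℝ :=
  open scoped Classical in
  ∑ E ∈ (⊤ : SimpleGraph (Fin n)).edgeFinset.powerset,
    if A (SimpleGraph.fromEdgeSet (↑E : Set (Sym2 (Fin n)))) then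
      p ^ E.card * (1 - p) ^ (n.choose 2 - E.card)
    else 0

/-- The number of edges of `G` between the sets `A` and `B` (counted as ordered
pairs with first coordinate in `A`; for disjoint `A`, `B` this is `e(A,B)`). -/
noncomputable def eAB {n : ℕ} (G : SimpleGraph (Fin n)) (A B : Finset (Fin n)) : ℕ :=
  Set.ncard {x : Fin n × Fin n | x.1 ∈ A ∧ x.2 ∈ B ∧ G.Adj x.1 x.2}

/-!
A union bound; write `q = np ≥ log n` and assume `|A| ≤ |B|`. Pairs with
`|A||B| < (0.8q)²` are settled by `e(A, B) ≤ |A||B|`, and pairs with `|B| ≥ 25|A|` by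
`e(A, B) ≤ ∑_{v ∈ A} deg v < 4q|A|` as long as every degree is below `4q`, which fails at a given
vertex with probability at most `n⁻²` by Chernoff's bound. For each remaining pair, Chernoff's bound
with parameter `r = 0.8n/√(|A||B|)` bounds the probability that `e(A, B) ≥ 0.8q√(|A||B|)` by
`n⁻⁴ / (C(n,|A|) C(n,|B|))` once `log n ≥ 3000`, and these bounds sum to `(n+1)²n⁻⁴`. So the
property fails with probability at most `5/n`.
-/

open Finset Real

namespace RandomSubset

variable {α : Type*} (T : Finset α) (p : ℝ)

noncomputable def weight (E : Finset α) : ℝ := p ^ #E * (1 - p) ^ (#T - #E)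

open scoped Classical in
noncomputable def prob (P : Finset α → Prop) : ℝ :=
  ∑ E ∈ T.powerset, if P E then weight T p E else 0

variable {T p}

lemma weight_nonneg (hp0 : 0 ≤ p) (hp1 : p ≤ 1) (E : Finset α) : 0 ≤ weight T p E := by
  have : 0 ≤ 1 - p := by linarith
  unfold weight
  positivity

lemma sum_weight_mul_pow_card_inter [DecidableEq α] {S : Finset α} (hS : S ⊆ T) (x : ℝ) :
    ∑ E ∈ T.powerset, weight T p E * x ^ #(E ∩ S) = (1 - p + p * x) ^ #S := by
  have hterm : ∀ E ∈ T.powerset, weight T p E * x ^ #(E ∩ S)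
      = (∏ e ∈ E, p * if e ∈ S then x else 1) * ∏ _e ∈ T \ E, (1 - p) := by
    intro E hE
    rw [prod_mul_distrib, prod_ite_mem, prod_const, prod_const, prod_const, weight,
      card_sdiff_of_subset (mem_powerset.mp hE)]
    ring
  rw [sum_congr rfl hterm, ← prod_add]
  have hfactor : ∀ e ∈ T, (p * (if e ∈ S then x else 1) + (1 - p))
      = if e ∈ S then 1 - p + p * x else 1 := by
    intro e _; split_ifs <;> ring
  rw [prod_congr rfl hfactor, prod_ite_mem, inter_eq_right.mpr hS, prod_const]

lemma sum_weight : ∑ E ∈ T.powerset, weight T p E = 1 := by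
  classical
  simpa using sum_weight_mul_pow_card_inter (T := T) (p := p) (empty_subset T) 1

lemma prob_mono (hp0 : 0 ≤ p) (hp1 : p ≤ 1) {P Q : Finset α → Prop} (h : ∀ E, P E → Q E) :
    prob T p P ≤ prob T p Q := by
  unfold prob
  gcongr with E
  split_ifs with hP hQ hQ
  exacts [le_rfl, absurd (h E hP) hQ, weight_nonneg hp0 hp1 E, le_rfl]

lemma prob_le_one (hp0 : 0 ≤ p) (hp1 : p ≤ 1) (P : Finset α → Prop) : prob T p P ≤ 1 := by
  classical
  calc prob T p P ≤ prob T p (fun _ => True) := prob_mono hp0 hp1 fun _ _ => trivial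
    _ = 1 := by simp [prob, sum_weight]

lemma prob_add_prob_not (P : Finset α → Prop) : prob T p P + prob T p (¬ P ·) = 1 := by
  classical
  rw [prob, prob, ← sum_add_distrib, ← sum_weight (T := T) (p := p)]
  refine sum_congr rfl fun E _ => ?_
  split_ifs <;> simp_all

lemma prob_or_le (hp0 : 0 ≤ p) (hp1 : p ≤ 1) (P Q : Finset α → Prop) :
    prob T p (fun E => P E ∨ Q E) ≤ prob T p P + prob T p Q := by
  rw [prob, prob, prob, ← sum_add_distrib]
  gcongr with E
  have := weight_nonneg hp0 hp1 (T := T) E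
  split_ifs <;> simp_all

lemma prob_exists_le_sum (hp0 : 0 ≤ p) (hp1 : p ≤ 1) {ι : Type*} (I : Finset ι)
    (P : ι → Finset α → Prop) :
    prob T p (fun E => ∃ i ∈ I, P i E) ≤ ∑ i ∈ I, prob T p (P i) := by
  classical
  simp only [prob]
  rw [sum_comm]
  gcongr with E
  have hw := weight_nonneg hp0 hp1 (T := T) E
  split_ifs with hP
  · obtain ⟨i, hi, hPi⟩ := hP
    simpa [hPi] using single_le_sum (f := fun i => if P i E then weight T p E else 0)
      (fun _ _ => by positivity) hi
  · exact sum_nonneg fun _ _ => by positivity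

/-- Chernoff's bound: Markov's inequality applied to `r ^ #(E ∩ S)`. -/
lemma prob_le_card_inter_le_exp [DecidableEq α] (hp0 : 0 ≤ p) (hp1 : p ≤ 1) {S : Finset α}
    (hS : S ⊆ T) {r : ℝ} (hr : 1 ≤ r) (τ : ℝ) :
    prob T p (fun E => τ ≤ #(E ∩ S)) ≤ exp (p * (r - 1) * #S - τ * log r) := by
  have hr0 : 0 < r := by linarith
  have hmarkov : ∀ E ∈ T.powerset, (if τ ≤ #(E ∩ S) then weight T p E else 0)
      ≤ exp (-(τ * log r)) * (weight T p E * r ^ #(E ∩ S)) := by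
    intro E _
    have hw := weight_nonneg hp0 hp1 (T := T) E
    split_ifs with hτ
    · have hone : 1 ≤ exp (-(τ * log r)) * r ^ #(E ∩ S) := by
        rw [← rpow_natCast, rpow_def_of_pos hr0, ← exp_add, one_le_exp_iff]
        nlinarith [log_nonneg hr]
      nlinarith
    · positivity
  calc prob T p (fun E => τ ≤ #(E ∩ S))
      ≤ ∑ E ∈ T.powerset, exp (-(τ * log r)) * (weight T p E * r ^ #(E ∩ S)) :=
        sum_le_sum hmarkov
    _ = exp (-(τ * log r)) * (1 - p + p * r) ^ #S := by
        rw [← mul_sum, sum_weight_mul_pow_card_inter hS]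
    _ ≤ exp (-(τ * log r)) * exp (p * (r - 1)) ^ #S := by
        gcongr
        linarith [add_one_le_exp (p * (r - 1))]
    _ = exp (p * (r - 1) * #S - τ * log r) := by
        rw [← exp_nat_mul, ← exp_add]; ring_nf

end RandomSubset

lemma Nat.cast_choose_le_exp_one_mul_div_pow (n k : ℕ) :
    (n.choose k : ℝ) ≤ (exp 1 * n / k) ^ k := by
  rcases k.eq_zero_or_pos with rfl | hk
  · simp
  have hk' : (0 : ℝ) < k := by exact_mod_cast hk
  have hfact : (0 : ℝ) < k.factorial := by exact_mod_cast k.factorial_pos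
  have hstirling : (k : ℝ) ^ k ≤ exp 1 ^ k * k.factorial := by
    have := pow_div_factorial_le_exp (x := (k : ℝ)) hk'.le k
    rw [div_le_iff₀ hfact, ← exp_one_pow] at this
    exact this
  calc (n.choose k : ℝ) ≤ n ^ k / k.factorial := Nat.choose_le_pow_div k n
    _ ≤ (exp 1 * n / k) ^ k := by
        rw [div_pow, mul_pow, div_le_div_iff₀ hfact (by positivity)]
        nlinarith [pow_nonneg (Nat.cast_nonneg (α := ℝ) n) k]

lemma sum_inv_choose_card (α : Type*) [Fintype α] :
    ∑ A : Finset α, ((Fintype.card α).choose #A : ℝ)⁻¹ = Fintype.card α + 1 := by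
  rw [← powerset_univ, sum_powerset_apply_card (fun k => ((Fintype.card α).choose k : ℝ)⁻¹),
    card_univ]
  calc _ = ∑ _k ∈ range (Fintype.card α + 1), (1 : ℝ) := by
        refine sum_congr rfl fun k hk => ?_
        have : ((Fintype.card α).choose k : ℝ) ≠ 0 :=
          Nat.cast_ne_zero.mpr (Nat.choose_pos (Nat.lt_succ_iff.mp (mem_range.mp hk))).ne'
        rw [nsmul_eq_mul, mul_inv_cancel₀ this]
    _ = Fintype.card α + 1 := by simp

lemma le_log_sub_one_add_inv {r : ℝ} (hr : 1.6 ≤ r) : 0.06 ≤ log r - 1 + r⁻¹ := by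
  have hlog : 1 - 1.6 / r ≤ log (r / 1.6) := by
    simpa using one_sub_inv_le_log_of_pos (show 0 < r / 1.6 by positivity)
  have h16 : log 1.6 = log 2 - log 1.25 := by
    rw [← log_div (by norm_num) (by norm_num)]; norm_num
  have h125 : log 1.25 ≤ 0.25 := by
    linarith [log_le_sub_one_of_pos (show (0 : ℝ) < 1.25 by norm_num)]
  have hinv : 0.6 / r ≤ 0.375 := by rw [div_le_iff₀ (by linarith)]; linarith
  rw [log_div (by positivity) (by norm_num)] at hlog
  have : 1.6 / r - r⁻¹ = 0.6 / r := by ring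
  linarith [log_two_gt_d9]

lemma two_mul_sqrt_mul_le_add {a b : ℝ} (ha : 0 ≤ a) (hb : 0 ≤ b) :
    2 * √(a * b) ≤ a + b := by
  rw [← le_div_iff₀' two_pos, sqrt_le_iff]
  exact ⟨by positivity, by nlinarith [sq_nonneg (a - b)]⟩

lemma log_exp_one_mul_div_le {n s x : ℝ} (hn : 0 < n) (hs : 0 < s) (hx : s ≤ 5 * x) :
    log (exp 1 * n / x) ≤ 5 + log (n / s) := by
  have hx0 : 0 < x := by linarith
  have hlog5 : log 5 ≤ 4 := by linarith [log_le_sub_one_of_pos (show (0 : ℝ) < 5 by norm_num)]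
  calc log (exp 1 * n / x) = 1 + log (n / x) := by
        rw [mul_div_assoc, log_mul (exp_ne_zero 1) (by positivity), log_exp]
    _ ≤ 1 + log (5 * (n / s)) := by
        gcongr
        rw [mul_div_assoc', div_le_div_iff₀ hx0 hs]; nlinarith
    _ ≤ 5 + log (n / s) := by rw [log_mul (by norm_num) (by positivity)]; linarith

lemma mul_log_add_mul_log_le {n a b : ℝ} (ha : 0 < a) (hab : a ≤ b) (hb : b ≤ 25 * a)
    (hbn : b ≤ n) :
    a * log (exp 1 * n / a) + b * log (exp 1 * n / b)
      ≤ 6 * √(a * b) * (5 + log (n / √(a * b))) := by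
  set s := √(a * b)
  have hs2 : s ^ 2 = a * b := sq_sqrt (by nlinarith)
  have hs0 : 0 < s := sqrt_pos.mpr (by nlinarith)
  have has : a ≤ s := le_sqrt_of_sq_le (by nlinarith)
  have hsb : s ≤ b := sqrt_le_iff.mpr ⟨by linarith, by nlinarith⟩
  have hsa : s ≤ 5 * a := by nlinarith
  have hbs : b ≤ 5 * s := by nlinarith
  have hu : 0 ≤ log (n / s) := log_nonneg (by rw [le_div_iff₀ hs0]; linarith)
  have hn : 0 < n := by linarith
  calc a * log (exp 1 * n / a) + b * log (exp 1 * n / b)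
      ≤ a * (5 + log (n / s)) + b * (5 + log (n / s)) :=
        add_le_add (mul_le_mul_of_nonneg_left (log_exp_one_mul_div_le hn hs0 hsa) ha.le)
          (mul_le_mul_of_nonneg_left (log_exp_one_mul_div_le hn hs0 (by linarith))
            (by linarith))
    _ ≤ 6 * s * (5 + log (n / s)) := by nlinarith

lemma add_mul_log_le_mul_log_sub_one_add_inv {L x : ℝ} (hL : 3000 ≤ L) (hx : 2 ≤ x) :
    35 + 6 * log x ≤ 0.8 * L * (log (0.8 * x) - 1 + (0.8 * x)⁻¹) := by
  have hG := le_log_sub_one_add_inv (show 1.6 ≤ 0.8 * x by linarith)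
  have hlog08 : -0.25 ≤ log 0.8 := by
    have : log 1.25 ≤ 0.25 := by
      linarith [log_le_sub_one_of_pos (show (0 : ℝ) < 1.25 by norm_num)]
    rw [show (0.8 : ℝ) = 1.25⁻¹ by norm_num, log_inv]; linarith
  have hGu : log x - 1.25 ≤ log (0.8 * x) - 1 + (0.8 * x)⁻¹ := by
    rw [log_mul (by norm_num) (by positivity)]
    have : 0 < (0.8 * x)⁻¹ := by positivity
    linarith
  nlinarith

/-- With `r = 0.8n/√(ab)`, the exponent of Chernoff's bound beats the logarithm of
`(en/a)^a (en/b)^b ≥ C(n,a) C(n,b)` by `4 log n`. -/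
lemma critical_pair_exponent_le {n p a b : ℝ} (hL : 3000 ≤ log n) (hnp : log n ≤ n * p)
    (ha : 0 < a) (hab : a ≤ b) (hb : b ≤ 25 * a) (habn : a + b ≤ n)
    (hdense : (0.8 * (n * p)) ^ 2 ≤ a * b) :
    p * (0.8 * n / √(a * b) - 1) * (a * b)
        - 0.8 * (n * p) * √(a * b) * log (0.8 * n / √(a * b))
      ≤ -(a * log (exp 1 * n / a) + b * log (exp 1 * n / b) + 4 * log n) := by
  have hent := mul_log_add_mul_log_le (n := n) ha hab hb (by linarith)
  set s := √(a * b)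
  have hs2 : s ^ 2 = a * b := sq_sqrt (by nlinarith)
  have hsq : 0.8 * (n * p) ≤ s := le_sqrt_of_sq_le hdense
  have hsL : 2400 ≤ s := by linarith
  have hns : 2 ≤ n / s := by rw [le_div_iff₀ (by linarith)]; nlinarith
  have hnum := add_mul_log_le_mul_log_sub_one_add_inv hL hns
  have hG := le_log_sub_one_add_inv (show 1.6 ≤ 0.8 * (n / s) by linarith)
  rw [← mul_div_assoc] at hnum hG
  have hexponent : p * (0.8 * n / s - 1) * (a * b) - 0.8 * (n * p) * s * log (0.8 * n / s)
      = -(0.8 * (n * p) * s * (log (0.8 * n / s) - 1 + (0.8 * n / s)⁻¹)) := by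
    have hn : n ≠ 0 := by rintro rfl; norm_num at hL
    have hs : s ≠ 0 := by positivity
    rw [← hs2]; field_simp; ring
  rw [hexponent, neg_le_neg_iff]
  set G := log (0.8 * n / s) - 1 + (0.8 * n / s)⁻¹
  have h1 : s * (35 + 6 * log (n / s)) ≤ s * (0.8 * log n * G) := by gcongr
  have h2 : 0.8 * log n * s * G ≤ 0.8 * (n * p) * s * G := by gcongr
  nlinarith

/-- The pairs `(A, B)` that are neither too small for `e(A, B) ≤ |A||B|` nor too unbalanced for
the degree bound to settle them. -/
def IsCriticalPair {V : Type*} (q : ℝ) (A B : Finset V) : Prop :=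
  Disjoint A B ∧ A.Nonempty ∧ #A ≤ #B ∧ #B ≤ 25 * #A ∧ (0.8 * q) ^ 2 ≤ (#A * #B : ℝ)

namespace SimpleGraph

variable {V : Type*} (G : SimpleGraph V) [DecidableRel G.Adj]

lemma card_interedges_comm (A B : Finset V) :
    #(G.interedges A B) = #(G.interedges B A) :=
  have : Std.Symm G.Adj := ⟨fun _ _ h => h.symm⟩
  Rel.card_interedges_comm A B

lemma card_interedges_le_sum_singleton [DecidableEq V] (A B : Finset V) :
    #(G.interedges A B) ≤ ∑ v ∈ A, #(G.interedges {v} B) := by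
  conv_lhs => rw [← A.biUnion_singleton_eq_self, G.interedges_biUnion_left]
  exact card_biUnion_le

lemma card_interedges_lt_of_card_mul_lt {A B : Finset V} (hA : A.Nonempty) (hB : B.Nonempty)
    {c : ℝ} (hc : 0 ≤ c) (h : (#A * #B : ℝ) < c ^ 2) :
    (#(G.interedges A B) : ℝ) < c * √(#A * #B) := by
  have hpos : 0 < √(#A * #B : ℝ) := by have := hA.card_pos; have := hB.card_pos; positivity
  have hc : √(#A * #B : ℝ) < c :=
    lt_of_pow_lt_pow_left₀ 2 hc (by rwa [sq_sqrt (by positivity)])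
  calc (#(G.interedges A B) : ℝ) ≤ #A * #B := mod_cast card_interedges_le_mul G A B
    _ = √(#A * #B) * √(#A * #B) := (mul_self_sqrt (by positivity)).symm
    _ < c * √(#A * #B) := by gcongr

lemma card_interedges_lt_of_forall_card_interedges_compl_lt [Fintype V] [DecidableEq V]
    {d : ℝ} (hdeg : ∀ v, (#(G.interedges {v} {v}ᶜ) : ℝ) < d) {A B : Finset V}
    (h : Disjoint A B) (hA : A.Nonempty) : (#(G.interedges A B) : ℝ) < #A * d := by
  calc (#(G.interedges A B) : ℝ) ≤ ∑ v ∈ A, (#(G.interedges {v} B) : ℝ) :=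
        mod_cast card_interedges_le_sum_singleton G A B
    _ ≤ ∑ v ∈ A, (#(G.interedges {v} {v}ᶜ) : ℝ) := by
        gcongr with v hv
        refine G.interedges_mono subset_rfl fun u hu => ?_
        simpa using fun hvu : u = v => Finset.disjoint_left.mp h hv (hvu ▸ hu)
    _ < ∑ _v ∈ A, d := sum_lt_sum_of_nonempty hA fun v _ => hdeg v
    _ = #A * d := by rw [sum_const, nsmul_eq_mul]

lemma card_interedges_lt_of_isCriticalPair [Fintype V] [DecidableEq V] {q : ℝ} (hq : 0 ≤ q)
    (hdeg : ∀ v, (#(G.interedges {v} {v}ᶜ) : ℝ) < 4 * q)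
    (hcrit : ∀ A B, IsCriticalPair q A B → (#(G.interedges A B) : ℝ) < 0.8 * q * √(#A * #B))
    {A B : Finset V} (h : Disjoint A B) (hA : A.Nonempty) (hB : B.Nonempty) :
    (#(G.interedges A B) : ℝ) < 0.8 * q * √(#A * #B) := by
  wlog hAB : #A ≤ #B generalizing A B
  · rw [card_interedges_comm, mul_comm (#A : ℝ)]
    exact this h.symm hB hA (by omega)
  by_cases hsmall : (#A * #B : ℝ) < (0.8 * q) ^ 2
  · exact G.card_interedges_lt_of_card_mul_lt hA hB (by positivity) hsmall
  by_cases hbal : #B ≤ 25 * #A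
  · exact hcrit A B ⟨h, hA, hAB, hbal, not_lt.mp hsmall⟩
  have h25 : 25 * (#A : ℝ) ≤ #B := by exact_mod_cast (not_le.mp hbal).le
  have h5 : 5 * (#A : ℝ) ≤ √(#A * #B) :=
    le_sqrt_of_sq_le (by nlinarith [Nat.cast_nonneg (α := ℝ) #A])
  calc (#(G.interedges A B) : ℝ) < #A * (4 * q) :=
        G.card_interedges_lt_of_forall_card_interedges_compl_lt hdeg h hA
    _ ≤ 0.8 * q * √(#A * #B) := by nlinarith

end SimpleGraph

section CrossPairs

variable {V : Type*} {A B : Finset V}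

def crossPairs [DecidableEq V] (A B : Finset V) : Finset (Sym2 V) :=
  (A ×ˢ B).image fun x => s(x.1, x.2)

lemma injOn_sym2Mk_product (h : Disjoint A B) :
    Set.InjOn (fun x : V × V => s(x.1, x.2)) (A ×ˢ B : Finset (V × V)) := by
  rintro ⟨a, b⟩ hab ⟨a', b'⟩ hab' heq
  simp only [coe_product, Set.mem_prod, mem_coe] at hab hab'
  rcases Sym2.eq_iff.mp heq with ⟨rfl, rfl⟩ | ⟨rfl, rfl⟩
  · rfl
  · exact absurd hab.1 (disjoint_right.mp h hab'.2)

lemma card_crossPairs [DecidableEq V] (h : Disjoint A B) : #(crossPairs A B) = #A * #B := by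
  rw [crossPairs, card_image_of_injOn (injOn_sym2Mk_product h), card_product]

lemma crossPairs_subset_edgeFinset_top [DecidableEq V] [Fintype V] (h : Disjoint A B) :
    crossPairs A B ⊆ (⊤ : SimpleGraph V).edgeFinset := by
  intro e he
  obtain ⟨⟨a, b⟩, hab, rfl⟩ := mem_image.mp he
  rw [mem_product] at hab
  simpa using fun hab' : a = b => Finset.disjoint_left.mp h hab.1 (hab' ▸ hab.2)

lemma SimpleGraph.card_interedges_fromEdgeSet [DecidableEq V] (E : Finset (Sym2 V))
    (h : Disjoint A B) :
    #((fromEdgeSet (E : Set (Sym2 V))).interedges A B) = #(E ∩ crossPairs A B) := by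
  rw [crossPairs, inter_comm, ← filter_mem_eq_inter, filter_image,
    card_image_of_injOn ((injOn_sym2Mk_product h).mono (coe_subset.mpr (filter_subset _ _))),
    interedges_def]
  congr 1
  refine filter_congr fun x hx => ?_
  have hne : x.1 ≠ x.2 := fun he =>
    Finset.disjoint_left.mp h (mem_product.mp hx).1 (he ▸ (mem_product.mp hx).2)
  simp [hne]

end CrossPairs

section Tails

open RandomSubset

variable {V : Type*} [Fintype V] [DecidableEq V] {p : ℝ}

lemma prob_card_inter_crossPairs_compl_le (hp0 : 0 ≤ p) (hp1 : p ≤ 1)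
    (hnp : log (Fintype.card V) ≤ Fintype.card V * p) (v : V) :
    prob (⊤ : SimpleGraph V).edgeFinset p
        (fun E => 4 * (Fintype.card V * p) ≤ #(E ∩ crossPairs {v} {v}ᶜ))
      ≤ ((Fintype.card V : ℝ) ^ 2)⁻¹ := by
  set n := Fintype.card V
  have hn : (0 : ℝ) < n := by exact_mod_cast Fintype.card_pos_iff.mpr ⟨v⟩
  have hd : Disjoint ({v} : Finset V) {v}ᶜ := disjoint_compl_right
  have hcard : (#(crossPairs {v} {v}ᶜ) : ℝ) ≤ n := by
    rw [card_crossPairs hd, card_singleton, one_mul, card_compl]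
    exact_mod_cast Nat.sub_le _ _
  have hlog3 : 1 ≤ log 3 := by
    rw [le_log_iff_exp_le (by norm_num)]; linarith [exp_one_lt_d9]
  calc _ ≤ exp (p * (3 - 1) * #(crossPairs {v} {v}ᶜ) - 4 * (n * p) * log 3) :=
        prob_le_card_inter_le_exp hp0 hp1 (crossPairs_subset_edgeFinset_top hd) (by norm_num) _
    _ ≤ exp (-log (n ^ 2)) := by
        gcongr
        rw [log_pow]; push_cast
        have hnp0 : 0 ≤ n * p := by positivity
        nlinarith [mul_le_mul_of_nonneg_left hcard hp0, mul_le_mul_of_nonneg_left hlog3 hnp0]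
    _ = ((n : ℝ) ^ 2)⁻¹ := by rw [exp_neg, exp_log (by positivity)]

lemma prob_isCriticalPair_le (hp0 : 0 ≤ p) (hp1 : p ≤ 1) (hL : 3000 ≤ log (Fintype.card V))
    (hnp : log (Fintype.card V) ≤ Fintype.card V * p) {A B : Finset V}
    (hcrit : IsCriticalPair (Fintype.card V * p) A B) :
    prob (⊤ : SimpleGraph V).edgeFinset p
        (fun E => 0.8 * (Fintype.card V * p) * √(#A * #B) ≤ #(E ∩ crossPairs A B))
      ≤ ((Fintype.card V : ℝ) ^ 4 * (Fintype.card V).choose #A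
          * (Fintype.card V).choose #B)⁻¹ := by
  set n := Fintype.card V
  obtain ⟨hd, hA, hab, hb, hdense⟩ := hcrit
  have ha : (0 : ℝ) < #A := by exact_mod_cast hA.card_pos
  have hab' : (#A : ℝ) ≤ #B := by exact_mod_cast hab
  have hb' : (#B : ℝ) ≤ 25 * #A := by exact_mod_cast hb
  have habn : (#A + #B : ℝ) ≤ n := by
    rw [← Nat.cast_add, ← card_union_of_disjoint hd]; exact_mod_cast card_le_univ _
  have hn : (0 : ℝ) < n := by linarith
  have hs : 0 < √(#A * #B : ℝ) := sqrt_pos.mpr (mul_pos ha (ha.trans_le hab'))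
  have hr : 1 ≤ 0.8 * n / √(#A * #B : ℝ) := by
    rw [le_div_iff₀ hs]; linarith [two_mul_sqrt_mul_le_add ha.le (ha.le.trans hab')]
  have hpow : ∀ k : ℕ, 0 < k → exp (k * log (exp 1 * n / k)) = (exp 1 * n / k) ^ k := by
    intro k hk
    rw [← log_pow, exp_log (by positivity)]
  have hpow4 : exp (4 * log n) = (n : ℝ) ^ 4 := by
    rw [show (4 : ℝ) * log n = log (n ^ 4) by rw [log_pow]; norm_num, exp_log (by positivity)]
  calc _ ≤ exp (p * (0.8 * n / √(#A * #B) - 1) * #(crossPairs A B)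
          - 0.8 * (n * p) * √(#A * #B) * log (0.8 * n / √(#A * #B))) :=
        prob_le_card_inter_le_exp hp0 hp1 (crossPairs_subset_edgeFinset_top hd) hr _
    _ ≤ exp (-(#A * log (exp 1 * n / #A) + #B * log (exp 1 * n / #B) + 4 * log n)) := by
        rw [card_crossPairs hd, Nat.cast_mul]
        exact exp_le_exp.mpr (critical_pair_exponent_le hL hnp ha hab' hb' habn hdense)
    _ = ((n : ℝ) ^ 4 * (exp 1 * n / #A) ^ #A * (exp 1 * n / #B) ^ #B)⁻¹ := by
        rw [exp_neg, exp_add, exp_add, hpow _ hA.card_pos, hpow _ (hA.card_pos.trans_le hab),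
          hpow4]
        ring
    _ ≤ ((n : ℝ) ^ 4 * n.choose #A * n.choose #B)⁻¹ := by
        gcongr
        · have := Nat.choose_pos (card_le_univ A); have := Nat.choose_pos (card_le_univ B)
          positivity
        all_goals exact Nat.cast_choose_le_exp_one_mul_div_pow _ _

end Tails

section Union

open RandomSubset

variable {V : Type*} [Fintype V] [DecidableEq V] {p : ℝ}

lemma sum_prob_card_inter_crossPairs_compl_le (hp0 : 0 ≤ p) (hp1 : p ≤ 1)
    (hnp : log (Fintype.card V) ≤ Fintype.card V * p) :
    ∑ v : V, prob (⊤ : SimpleGraph V).edgeFinset p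
        (fun E => 4 * (Fintype.card V * p) ≤ #(E ∩ crossPairs {v} {v}ᶜ))
      ≤ (Fintype.card V : ℝ)⁻¹ := by
  calc _ ≤ ∑ _v : V, ((Fintype.card V : ℝ) ^ 2)⁻¹ :=
        sum_le_sum fun v _ => prob_card_inter_crossPairs_compl_le hp0 hp1 hnp v
    _ = (Fintype.card V : ℝ)⁻¹ := by
        rw [sum_const, card_univ, nsmul_eq_mul]
        rcases (Fintype.card V).eq_zero_or_pos with h | h
        · simp [h]
        · field_simp

open scoped Classical in
lemma sum_prob_isCriticalPair_le (hp0 : 0 ≤ p) (hp1 : p ≤ 1)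
    (hL : 3000 ≤ log (Fintype.card V)) (hnp : log (Fintype.card V) ≤ Fintype.card V * p) :
    ∑ z ∈ univ.filter fun z : Finset V × Finset V => IsCriticalPair (Fintype.card V * p) z.1 z.2,
      prob (⊤ : SimpleGraph V).edgeFinset p
        (fun E => 0.8 * (Fintype.card V * p) * √(#z.1 * #z.2) ≤ #(E ∩ crossPairs z.1 z.2))
      ≤ 4 / Fintype.card V := by
  have hsum := sum_inv_choose_card V
  set n := Fintype.card V
  have hn : (1 : ℝ) ≤ n := by
    by_contra h
    have := log_nonpos (Nat.cast_nonneg n) (not_le.mp h).le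
    linarith
  calc _ ≤ ∑ z ∈ univ.filter (fun z : Finset V × Finset V => IsCriticalPair (n * p) z.1 z.2),
          ((n : ℝ) ^ 4 * n.choose #z.1 * n.choose #z.2)⁻¹ :=
        sum_le_sum fun z hz => prob_isCriticalPair_le hp0 hp1 hL hnp (mem_filter.mp hz).2
    _ ≤ ∑ z : Finset V × Finset V, ((n : ℝ) ^ 4 * n.choose #z.1 * n.choose #z.2)⁻¹ :=
        sum_le_sum_of_subset_of_nonneg (filter_subset _ _) fun _ _ _ => by positivity
    _ = ((n : ℝ) + 1) ^ 2 / n ^ 4 := by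
        simp only [mul_inv, Fintype.sum_prod_type, ← mul_sum, ← sum_mul, hsum]
        ring
    _ ≤ 4 / n := by
        rw [div_le_div_iff₀ (by positivity) (by positivity)]
        nlinarith [pow_le_pow_right₀ hn (show 3 ≤ 4 by norm_num)]

end Union

open RandomSubset in
lemma prob_forall_card_interedges_lt {V : Type*} [Fintype V] [DecidableEq V] {p : ℝ}
    (hp0 : 0 ≤ p) (hp1 : p ≤ 1) (hL : 3000 ≤ log (Fintype.card V))
    (hnp : log (Fintype.card V) ≤ Fintype.card V * p) :
    1 - 5 / Fintype.card V ≤ prob (⊤ : SimpleGraph V).edgeFinset p (fun E =>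
      ∀ A B : Finset V, Disjoint A B → A.Nonempty → B.Nonempty →
        (#((SimpleGraph.fromEdgeSet (E : Set (Sym2 V))).interedges A B) : ℝ)
          < 0.8 * (Fintype.card V * p) * √(#A * #B)) := by
  classical
  set q := Fintype.card V * p
  let degreeBad (v : V) (E : Finset (Sym2 V)) : Prop := 4 * q ≤ #(E ∩ crossPairs {v} {v}ᶜ)
  let pairBad (z : Finset V × Finset V) (E : Finset (Sym2 V)) : Prop :=
    0.8 * q * √(#z.1 * #z.2) ≤ #(E ∩ crossPairs z.1 z.2)
  let critical := univ.filter fun z : Finset V × Finset V => IsCriticalPair q z.1 z.2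
  have hgood : ∀ E, ¬ ((∃ v ∈ univ, degreeBad v E) ∨ ∃ z ∈ critical, pairBad z E) →
      ∀ A B : Finset V, Disjoint A B → A.Nonempty → B.Nonempty →
        (#((SimpleGraph.fromEdgeSet (E : Set (Sym2 V))).interedges A B) : ℝ)
          < 0.8 * q * √(#A * #B) := by
    intro E hE A B h hA hB
    simp only [not_or, not_exists, not_and] at hE
    refine SimpleGraph.card_interedges_lt_of_isCriticalPair _ (by positivity) (fun v => ?_)
      (fun A B hc => ?_) h hA hB
    · rw [SimpleGraph.card_interedges_fromEdgeSet E disjoint_compl_right]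
      exact not_le.mp (hE.1 v (mem_univ v))
    · rw [SimpleGraph.card_interedges_fromEdgeSet E hc.1]
      exact not_le.mp (hE.2 (A, B) (mem_filter.mpr ⟨mem_univ _, hc⟩))
  have hdeg : ∑ v ∈ univ, prob _ p (degreeBad v) ≤ (Fintype.card V : ℝ)⁻¹ :=
    sum_prob_card_inter_crossPairs_compl_le hp0 hp1 hnp
  have hpair : ∑ z ∈ critical, prob _ p (pairBad z) ≤ 4 / Fintype.card V :=
    sum_prob_isCriticalPair_le hp0 hp1 hL hnp
  calc 1 - 5 / Fintype.card V
      ≤ 1 - (∑ v ∈ univ, prob _ p (degreeBad v) + ∑ z ∈ critical, prob _ p (pairBad z)) := by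
        rw [show (5 : ℝ) / Fintype.card V = (Fintype.card V : ℝ)⁻¹ + 4 / Fintype.card V by
          ring]
        exact sub_le_sub_left (add_le_add hdeg hpair) 1
    _ ≤ 1 - prob _ p (fun E => (∃ v ∈ univ, degreeBad v E) ∨ ∃ z ∈ critical, pairBad z E) := by
        gcongr
        exact (prob_or_le hp0 hp1 _ _).trans (add_le_add (prob_exists_le_sum hp0 hp1 _ _)
          (prob_exists_le_sum hp0 hp1 _ _))
    _ = prob _ p (fun E => ¬ ((∃ v ∈ univ, degreeBad v E) ∨ ∃ z ∈ critical, pairBad z E)) := by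
        rw [← prob_add_prob_not (fun E => (∃ v ∈ univ, degreeBad v E) ∨ ∃ z ∈ critical,
          pairBad z E)]
        ring
    _ ≤ _ := prob_mono hp0 hp1 hgood

lemma prG_eq_prob (n : ℕ) (p : ℝ) (P : SimpleGraph (Fin n) → Prop) :
    prG n p P = RandomSubset.prob (⊤ : SimpleGraph (Fin n)).edgeFinset p
      (fun E => P (SimpleGraph.fromEdgeSet E)) := by
  unfold prG RandomSubset.prob RandomSubset.weight
  rw [SimpleGraph.card_edgeFinset_top_eq_card_choose_two]
  simp [Fintype.card_fin]

lemma eAB_eq_card_interedges {n : ℕ} (G : SimpleGraph (Fin n)) [DecidableRel G.Adj]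
    (A B : Finset (Fin n)) : eAB G A B = #(G.interedges A B) := by
  rw [eAB, ← Set.ncard_coe_finset]
  congr 1
  ext x
  simp [SimpleGraph.mem_interedges_iff]

/-- for `p ≥ ln n / n`, a.a.s. every pair of disjoint (nonempty) vertex
sets `A`, `B` of `G(n,p)` spans fewer than `0.8·np·√(|A||B|)` edges. -/
theorem aas_edge_bound (p : ℕ → ℝ)
    (hp : ∀ n : ℕ, Real.log n / n ≤ p n) (hp1 : ∀ n, p n ≤ 1) :
    Tendsto (fun n : ℕ => prG n (p n) (fun G =>
      ∀ A B : Finset (Fin n), Disjoint A B → A.Nonempty → B.Nonempty →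
        (eAB G A B : ℝ) < 0.8 * (n : ℝ) * p n * Real.sqrt ((A.card : ℝ) * B.card)))
      atTop (nhds 1) := by
  classical
  have hp0 (n : ℕ) : 0 ≤ p n := (div_nonneg (log_natCast_nonneg n) n.cast_nonneg).trans (hp n)
  have hlower : Tendsto (fun n : ℕ => 1 - 5 / (n : ℝ)) atTop (nhds 1) := by
    simpa using (tendsto_const_nhds (x := (1 : ℝ))).sub (tendsto_const_div_atTop_nhds_zero_nat 5)
  refine tendsto_of_tendsto_of_tendsto_of_le_of_le' hlower tendsto_const_nhds ?_ (.of_forall fun n => (prG_eq_prob _ _ _).trans_le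
      (RandomSubset.prob_le_one (hp0 n) (hp1 n) _))
  filter_upwards [(tendsto_log_atTop.comp tendsto_natCast_atTop_atTop).eventually_ge_atTop 3000]
    with n hL
  have hn : (0 : ℝ) < n := Nat.cast_pos.mpr (Nat.pos_of_ne_zero (by rintro rfl; norm_num at hL))
  have key := prob_forall_card_interedges_lt (V := Fin n) (hp0 n) (hp1 n) (by simpa using hL)
    (by simpa [div_le_iff₀' hn] using hp n)
  rw [Fintype.card_fin] at key
  rw [prG_eq_prob]
  refine key.trans (RandomSubset.prob_mono (hp0 n) (hp1 n) fun E hE A B h hA hB => ?_)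
  rw [eAB_eq_card_interedges, mul_assoc 0.8]
  exact hE A B h hA hB
end
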